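/- Let m ≥ 4 and n ≥ 1, and let T be a triangulation of the grid-covered cylinder graph G_{m,n} in which every layer L_i (2 ≤ i ≤ n) has all its cells of the same type. Then the orientation O of T (defined by: horizontal edges oriented v_{x0} → v_{x(m−1)}, v_{x(m−1)} → v_{x(m−2)}, and v_{xy} → v_{x(y+1)} for 0 ≤ y ≤ m−3; each diagonal edge oriented in the same direction as the horizontal edges of its cell; vertical edges oriented v_{0y} → v_{1y}, and for 1 ≤ x ≤ n−1 the edge between v_{xy} and v_{(x+1)y} oriented the same way as the edge between v_{(x−1)y} and v_{xy} if layer L_{x+1} is of type A and the opposite way if L_{x+1} is of type B) is acyclic. -/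

import Mathlib

/-- A digraph is acyclic: no directed cycle. -/
def DigraphAcyclic {V : Type*} (D : V → V → Prop) : Prop :=
  ∀ v, ¬ Relation.TransGen D v v

/-- The grid-covered cylinder graph `G_{m,n}` on vertices `(i, j)` with level
`i ∈ {0,...,n}` and column `j ∈ {0,...,m-1}`: horizontal edges join `(i, j)` and
`(i, (j+1) mod m)`, vertical edges join `(i, j)` and `(i+1, j)`. -/
def gccg (m n : ℕ) : SimpleGraph (Fin (n + 1) × Fin m) where
  Adj u v := u ≠ v ∧
    ((u.1 = v.1 ∧ ((u.2.val + 1) % m = v.2.val ∨ (v.2.val + 1) % m = u.2.val)) ∨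
     (u.2 = v.2 ∧ (u.1.val + 1 = v.1.val ∨ v.1.val + 1 = u.1.val)))
  symm := ⟨by
    rintro u v ⟨hne, h | h⟩
    · exact ⟨hne.symm, Or.inl ⟨h.1.symm, h.2.symm⟩⟩
    · exact ⟨hne.symm, Or.inr ⟨h.1.symm, h.2.symm⟩⟩⟩
  loopless := ⟨fun u h => h.1 rfl⟩

/-- The two endpoints (as `(level, column)` pairs) of the chosen diagonal of the cell with
lower-left corner `(i, j)`: `true` selects the diagonal `(i,j)—(i+1,(j+1) mod m)`, and
`false` selects the diagonal `(i+1,j)—(i,(j+1) mod m)`. -/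
def cellDiag (m : ℕ) (b : Bool) (i j : ℕ) : (ℕ × ℕ) × (ℕ × ℕ) :=
  if b then ((i, j), (i + 1, (j + 1) % m)) else ((i + 1, j), (i, (j + 1) % m))

/-- `u` and `v` (as `(level, column)` pairs) are the endpoints of the diagonal added to
some cell, where `d i j = some b` means the cell `(i, j)` gets the diagonal selected by
`b`, and `d i j = none` means the cell `(i, j)` gets no diagonal. -/
def DiagAdj (m n : ℕ) (d : ℕ → ℕ → Option Bool) (u v : ℕ × ℕ) : Prop :=
  ∃ i < n, ∃ j < m, ∃ b : Bool, d i j = some b ∧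
    ((u, v) = cellDiag m b i j ∨ (v, u) = cellDiag m b i j)

/-- The graph obtained from the grid-covered cylinder graph `G_{m,n}` by adding, in each
cell `(i,j)` with `d i j = some b`, the diagonal selected by `b` (cells with
`d i j = none` are left untriangulated). -/
def ptri (m n : ℕ) (d : ℕ → ℕ → Option Bool) : SimpleGraph (Fin (n + 1) × Fin m) where
  Adj u v := (gccg m n).Adj u v ∨ DiagAdj m n d (u.1.val, u.2.val) (v.1.val, v.2.val)
  symm := ⟨by
    rintro u v (h | ⟨i, hi, j, hj, b, hb, h⟩)
    · exact Or.inl ((gccg m n).adj_symm h)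
    · exact Or.inr ⟨i, hi, j, hj, b, hb, h.symm⟩⟩
  loopless := ⟨by
    rintro u (h | ⟨i, hi, j, hj, b, hb, h⟩)
    · exact (gccg m n).irrefl h
    · rcases h with h | h <;> cases b <;> simp [cellDiag] at h <;> omega⟩

/-- A (full) triangulation of the grid-covered cylinder graph `G_{m,n}`: every cell gets
exactly one diagonal, chosen by `d`. -/
def tri (m n : ℕ) (d : ℕ → ℕ → Bool) : SimpleGraph (Fin (n + 1) × Fin m) :=
  ptri m n (fun i j => some (d i j))

/-- The set of the two endpoints (as `(level, column)` pairs) of the diagonal of cell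
`(i, j)` in the full triangulation determined by `d`. -/
def diagEndsSet (m : ℕ) (d : ℕ → ℕ → Bool) (i j : ℕ) : Set (ℕ × ℕ) :=
  if d i j then {(i, j), (i + 1, (j + 1) % m)} else {(i + 1, j), (i, (j + 1) % m)}

/-- Cell `(i, j)` (meaningful for `1 ≤ i`, i.e. for cells on layers `L 2, ..., L n`) is of
type A if its diagonal has no vertex in common with the diagonal of the cell `(i-1, j)`
directly below it; it is of type B otherwise. -/
def CellTypeA (m : ℕ) (d : ℕ → ℕ → Bool) (i j : ℕ) : Prop :=
  ∀ p ∈ diagEndsSet m d i j, p ∉ diagEndsSet m d (i - 1) j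

/-- The column at which the oriented horizontal edges of sector `j` (the sector whose
horizontal edges join columns `j` and `(j+1) mod m`) start: the horizontal arcs are
`v x 0 → v x (m-1)`, `v x (m-1) → v x (m-2)` and `v x y → v x (y+1)` for `y ≤ m - 3`. -/
def hsrc (m j : ℕ) : ℕ :=
  if j = m - 1 then 0 else if j = m - 2 then m - 1 else j

/-- The column at which the oriented horizontal edges of sector `j` end. -/
def hdst (m j : ℕ) : ℕ :=
  if j = m - 1 then m - 1 else if j = m - 2 then m - 2 else j + 1

/-- The level of the endpoint of the diagonal of cell `(i, j)` that lies on column `c`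
(meaningful for `c ∈ {j, (j+1) mod m}`, the two columns of sector `j`). -/
def diagLevel (d : ℕ → ℕ → Bool) (i j c : ℕ) : ℕ :=
  if c = j then (if d i j then i else i + 1) else (if d i j then i + 1 else i)

/-- A layer (given by its cell index `x`, i.e. layer `L (x+1)`) is of type A if all of its
cells are of type A. -/
def LayerTypeA (m : ℕ) (d : ℕ → ℕ → Bool) (x : ℕ) : Prop :=
  ∀ j < m, CellTypeA m d x j

open Classical in
/-- The direction of the vertical edges between levels `x` and `x + 1` in the orientation
`O`: `true` means upward (`v x y → v (x+1) y`), `false` means downward. The edges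
`v 0 y → v 1 y` point upward, and the direction is kept when passing to a layer of type A
and reversed when passing to a layer of type B. -/
noncomputable def vdir (m : ℕ) (d : ℕ → ℕ → Bool) : ℕ → Bool
  | 0 => true
  | x + 1 => if LayerTypeA m d (x + 1) then vdir m d x else !(vdir m d x)

/-- The orientation `O` of the triangulation `tri m n d`: horizontal edges are oriented
`v x 0 → v x (m-1)`, `v x (m-1) → v x (m-2)` and `v x y → v x (y+1)` for `0 ≤ y ≤ m-3`;
every diagonal edge is oriented in the same direction (from column `hsrc m j` to column
`hdst m j`) as the horizontal edges of the sector of the cell it belongs to; vertical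
edges are oriented according to `vdir`. -/
def Orient (m n : ℕ) (d : ℕ → ℕ → Bool) (u v : Fin (n + 1) × Fin m) : Prop :=
  -- horizontal arcs
  (u.1 = v.1 ∧ ((u.2.val = 0 ∧ v.2.val = m - 1) ∨ (u.2.val = m - 1 ∧ v.2.val = m - 2) ∨
      (u.2.val + 2 ≤ m - 1 ∧ v.2.val = u.2.val + 1))) ∨
  -- diagonal arcs
  (∃ i < n, ∃ j < m,
      u.2.val = hsrc m j ∧ v.2.val = hdst m j ∧
      u.1.val = diagLevel d i j (hsrc m j) ∧ v.1.val = diagLevel d i j (hdst m j)) ∨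
  -- vertical arcs
  (u.2 = v.2 ∧ ((v.1.val = u.1.val + 1 ∧ vdir m d u.1.val = true) ∨
                (u.1.val = v.1.val + 1 ∧ vdir m d v.1.val = false)))

/-! The columns are ordered by the horizontal arcs as `0 → 1 → ⋯ → m-2` and
`0 → m-1 → m-2`, and every horizontal or diagonal arc goes forward in this order. Vertical
arcs stay in one column, and all vertical arcs between levels `x` and `x + 1` point the
same way, so the level potential that changes by `±1` according to `vdir` increases along
them. Hence the lexicographic pair (column rank, level potential) strictly increases along
every arc of `O`. -/

lemma DigraphAcyclic.of_forall_lt {V α : Type*} [Preorder α] {D : V → V → Prop} (f : V → α)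
    (hf : ∀ u v, D u v → f u < f v) : DigraphAcyclic D := fun v hv => by
  have hlt : Relation.TransGen (· < ·) (f v) (f v) := Relation.TransGen.lift f hf _ _ hv
  rw [Relation.transGen_eq_self] at hlt
  exact lt_irrefl _ hlt

def columnRank (m c : ℕ) : ℕ :=
  if c = 0 then 0 else if c = m - 1 then 1 else c + 1

lemma columnRank_lt_of_horizontal {m a b : ℕ} (hm : 3 ≤ m)
    (h : (a = 0 ∧ b = m - 1) ∨ (a = m - 1 ∧ b = m - 2) ∨ (a + 2 ≤ m - 1 ∧ b = a + 1)) :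
    columnRank m a < columnRank m b := by
  unfold columnRank
  split_ifs <;> omega

lemma columnRank_hsrc_lt_hdst {m j : ℕ} (hm : 3 ≤ m) (hj : j < m) :
    columnRank m (hsrc m j) < columnRank m (hdst m j) := by
  unfold hsrc hdst
  apply columnRank_lt_of_horizontal hm
  split_ifs <;> omega

noncomputable def levelPotential (m : ℕ) (d : ℕ → ℕ → Bool) : ℕ → ℤ
  | 0 => 0
  | x + 1 => levelPotential m d x + if vdir m d x then 1 else -1

lemma levelPotential_lt_of_vertical {m : ℕ} {d : ℕ → ℕ → Bool} {a b : ℕ}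
    (h : (b = a + 1 ∧ vdir m d a = true) ∨ (a = b + 1 ∧ vdir m d b = false)) :
    levelPotential m d a < levelPotential m d b := by
  rcases h with ⟨rfl, hup⟩ | ⟨rfl, hdown⟩
  · simp [levelPotential, hup]
  · simp [levelPotential, hdown]

noncomputable def orientPotential (m n : ℕ) (d : ℕ → ℕ → Bool) (u : Fin (n + 1) × Fin m) :
    ℕ ×ₗ ℤ :=
  toLex (columnRank m u.2.val, levelPotential m d u.1.val)

lemma orientPotential_lt_of_orient {m n : ℕ} (hm : 3 ≤ m) {d : ℕ → ℕ → Bool}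
    {u v : Fin (n + 1) × Fin m} (h : Orient m n d u v) :
    orientPotential m n d u < orientPotential m n d v := by
  rw [orientPotential, orientPotential, Prod.Lex.toLex_lt_toLex]
  rcases h with ⟨-, horizontal⟩ | ⟨-, -, j, hj, hu, hv, -⟩ | ⟨hcol, vertical⟩
  · exact Or.inl (columnRank_lt_of_horizontal hm horizontal)
  · exact Or.inl (hu ▸ hv ▸ columnRank_hsrc_lt_hdst hm hj)
  · exact Or.inr ⟨by rw [hcol], levelPotential_lt_of_vertical vertical⟩

theorem orientation_O_acyclic_general (m n : ℕ) (hm : 4 ≤ m)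
    (d : ℕ → ℕ → Bool) :
    DigraphAcyclic (Orient m n d) :=
  DigraphAcyclic.of_forall_lt (orientPotential m n d) fun _ _ =>
    orientPotential_lt_of_orient (by omega)

/-- For a triangulation of a grid-covered cylinder graph with at least four sectors in
which every layer `L 2, ..., L n` has all its cells of the same type, the orientation `O`
is acyclic. -/
theorem orientation_O_acyclic (m n : ℕ) (hm : 4 ≤ m) (hn : 1 ≤ n)
    (d : ℕ → ℕ → Bool)
    (huniform : ∀ x : ℕ, 1 ≤ x → x < n →
      ((∀ j < m, CellTypeA m d x j) ∨ (∀ j < m, ¬ CellTypeA m d x j))) :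
    DigraphAcyclic (Orient m n d) :=
  orientation_O_acyclic_general m n hm d
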